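/- arXiv:2105.00711 — 3 statements merged into one kernel-verified Lean document; each statement's English description precedes it below -/
import Mathlib

section
/- Let X, Z be finite disjoint sets, Q ∈ 𝔓(Z), and let y be a point not contained in X ∪ Z. Then 𝔊_{Q+A_y}(X) = {G + A_y : G ∈ 𝔊_Q(X)}, i.e., a p.o.r. G' belongs to 𝔊_{Q+A_y}(X) if and only if G' = G + A_y for some G ∈ 𝔊_Q(X). -/
namespace Erne

variable {α : Type*}

/-- A partial order relation with carrier `X`: a reflexive, antisymmetric,
transitive subset of `X × X`. -/
def IsPor (X : Set α) (R : Set (α × α)) : Prop :=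
  R ⊆ X ×ˢ X ∧ (∀ x ∈ X, (x, x) ∈ R) ∧
    (∀ x y, (x, y) ∈ R → (y, x) ∈ R → x = y) ∧
    (∀ x y z, (x, y) ∈ R → (y, z) ∈ R → (x, z) ∈ R)

/-- The carrier of a p.o.r. (recovered from reflexivity). -/
def carrier (R : Set (α × α)) : Set α := {x | (x, x) ∈ R}

/-- The induced p.o.r. `R|_M = R ∩ (M × M)`. -/
def restrict (R : Set (α × α)) (M : Set α) : Set (α × α) := R ∩ M ×ˢ M

/-- The dual `R^d`. -/
def dual (R : Set (α × α)) : Set (α × α) := {p | (p.2, p.1) ∈ R}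

/-- `↑_R M`. -/
def upSet (R : Set (α × α)) (M : Set α) : Set α := {x | ∃ y ∈ M, (y, x) ∈ R}

/-- `↓_R M`. -/
def downSet (R : Set (α × α)) (M : Set α) : Set α := {x | ∃ y ∈ M, (x, y) ∈ R}

/-- `↑_R x`. -/
def up (R : Set (α × α)) (x : α) : Set α := {z | (x, z) ∈ R}

/-- `↓_R y`. -/
def down (R : Set (α × α)) (y : α) : Set α := {x | (x, y) ∈ R}

/-- `L` is a lower end of `R`. -/
def IsLowerEnd (R : Set (α × α)) (L : Set α) : Prop :=
  ∀ x y, (x, y) ∈ R → y ∈ L → x ∈ L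

/-- `U` is an upper end of `R`. -/
def IsUpperEnd (R : Set (α × α)) (U : Set α) : Prop :=
  ∀ x y, (x, y) ∈ R → x ∈ U → y ∈ U

/-- `M` is convex in `R`. -/
def IsConvex (R : Set (α × α)) (M : Set α) : Prop :=
  ∀ a b x, a ∈ M → b ∈ M → (a, x) ∈ R → (x, b) ∈ R → x ∈ M

/-- The set of maximal points of `R`: those `x` with `↑_R x = {x}`. -/
def maxPts (R : Set (α × α)) : Set α := {x | up R x = {x}}

/-- `max M = max R|_M`. -/
def maxOf (R : Set (α × α)) (M : Set α) : Set α := maxPts (restrict R M)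

/-- `γ_R(M) = ⋃_{(m,n) ∈ M×M} (↑_R m) ∩ (↓_R n)`, the convex hull of `M` in `R`. -/
def gamma (R : Set (α × α)) (M : Set α) : Set α :=
  {x | ∃ m ∈ M, ∃ n ∈ M, (m, x) ∈ R ∧ (x, n) ∈ R}

/-- The antichain (diagonal) `Δ_Y` on `Y`. -/
def diag (Y : Set α) : Set (α × α) := {p | p.1 = p.2 ∧ p.1 ∈ Y}

/-- `𝔘(X,Y)`: p.o.r.'s on `X ∪ Y` in which `Y` is an upper end. -/
def Uset (X Y : Set α) : Set (Set (α × α)) :=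
  {R | IsPor (X ∪ Y) R ∧ IsUpperEnd R Y}

/-- `ℭ_Q(X,Y)`: p.o.r.'s on `X ∪ Y` with `R|_Y = Q` convex in `R`. -/
def Cset (Q : Set (α × α)) (X Y : Set α) : Set (Set (α × α)) :=
  {R | IsPor (X ∪ Y) R ∧ restrict R Y = Q ∧ IsConvex R Y}

/-- `𝔐_Q(X,Y) = 𝔘(X,Y) ∩ ℭ_Q(X,Y)`. -/
def Mset (Q : Set (α × α)) (X Y : Set α) : Set (Set (α × α)) :=
  Uset X Y ∩ Cset Q X Y

/-- `𝔐*_Q(X,Y)`: members of `ℭ_Q(X,Y)` with `max Q = max R`. -/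
def MstarSet (Q : Set (α × α)) (X Y : Set α) : Set (Set (α × α)) :=
  {R ∈ Cset Q X Y | maxPts Q = maxPts R}

/-- `ℑ_Q(X,Y)`: p.o.r.'s on `X ∪ Y` with `R|_Y = Q`. -/
def Iset (Q : Set (α × α)) (X Y : Set α) : Set (Set (α × α)) :=
  {R | IsPor (X ∪ Y) R ∧ restrict R Y = Q}

/-- `𝔑*_Q(X,Y)`: members of `ℑ_Q(X,Y)` with `max Q = max R`. -/
def NstarSet (Q : Set (α × α)) (X Y : Set α) : Set (Set (α × α)) :=
  {R ∈ Iset Q X Y | maxPts Q = maxPts R}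

/-- `τ_{X,Y}(R) = (R|_X)^d ∪ ((X×Y) \ R) ∪ (R|_Y)^d`. -/
def tau (X Y : Set α) (R : Set (α × α)) : Set (α × α) :=
  dual (restrict R X) ∪ ((X ×ˢ Y) \ R) ∪ dual (restrict R Y)

/-- `𝒢_Q(M)`: members `G` of `ℑ_Q(M,Y)` with `γ_G(Y) = c(G)`. -/
def GsetM (Q : Set (α × α)) (Y M : Set α) : Set (Set (α × α)) :=
  {G ∈ Iset Q M Y | gamma G Y = carrier G}

/-- `𝔊_Q(X) = ⋃_{M ⊆ X} 𝒢_Q(M)`. -/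
def Gset (Q : Set (α × α)) (X Y : Set α) : Set (Set (α × α)) :=
  {G | ∃ M ⊆ X, G ∈ GsetM Q Y M}

/-- `ℒ(P)`: the lower ends of `P` (subsets of the carrier of `P`). -/
def lowerEnds (P : Set (α × α)) : Set (Set α) :=
  {L | L ⊆ carrier P ∧ IsLowerEnd P L}

/-- `ℋ_Q(Y, ℒ(P))`: mappings `f : Y → ℒ(P)` with `(a,b) ∈ Q → f a ⊆ f b`. -/
def Hset (Q P : Set (α × α)) (Y : Set α) : Set (↥Y → Set α) :=
  {f | (∀ y, f y ∈ lowerEnds P) ∧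
    ∀ a b : ↥Y, ((a : α), (b : α)) ∈ Q → f a ⊆ f b}

/-- `Φ(f) = P ∪ Q ∪ ⋃_{y ∈ Y} (f(y) × {y})` for `f ∈ ℋ_Q(Y, ℒ(P))`. -/
def Phi (Q : Set (α × α)) (Y : Set α) (P : Set (α × α)) (f : ↥Y → Set α) :
    Set (α × α) :=
  P ∪ Q ∪ {p | ∃ h : p.2 ∈ Y, p.1 ∈ f ⟨p.2, h⟩}

/-- `𝔉_Q(X,Y)`: pairs `(P, f)` with `P ∈ 𝔓(X)` and `f ∈ ℋ_Q(Y, ℒ(P))`;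
the first component encodes `S(f) = P`. -/
def Fset (Q : Set (α × α)) (X Y : Set α) :
    Set (Set (α × α) × (↥Y → Set α)) :=
  {pf | IsPor X pf.1 ∧ pf.2 ∈ Hset Q pf.1 Y}

/-- `𝔉*_Q(X,Y)`: those `f ∈ 𝔉_Q(X,Y)` with `X = ⋃_{y ∈ Y} f(y)`. -/
def FstarSet (Q : Set (α × α)) (X Y : Set α) :
    Set (Set (α × α) × (↥Y → Set α)) :=
  {pf ∈ Fset Q X Y | X = ⋃ y : ↥Y, pf.2 y}

/-- The transitive hull of `S`: the smallest transitive relation containing `S`. -/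
def transHull (S : Set (α × α)) : Set (α × α) :=
  {p | Relation.TransGen (fun a b => (a, b) ∈ S) p.1 p.2}

/-!
In a member `G` of `𝒢_{Q+A_y}(M)` the point `y` is isolated: every point `x` related to `y`
lies in `c(G) = γ_G(Z ∪ {y})`, so it sits above and below points of `Z ∪ {y}`; by transitivity
one of these is comparable with `y`, and since `G|_{Z ∪ {y}} = Q + A_y` it must be `y` itself,
whence `x = y` by antisymmetry. So `G = G₀ + A_y` with `y` outside the field of `G₀`, and
adjoining such an isolated point commutes with the p.o.r. axioms, restriction, carrier and
convex hull.
-/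

section IsolatedPoint

variable {R G Q : Set (α × α)} {S M Z : Set α} {y : α}

lemma union_singleton_inj {A B : Set α} {a : α} (hA : a ∉ A) (hB : a ∉ B) :
    A ∪ {a} = B ∪ {a} ↔ A = B := by
  refine ⟨fun h => ?_, fun h => h ▸ rfl⟩
  ext x
  have hx := Set.ext_iff.1 h x
  by_cases hxa : x = a
  · subst hxa; simp only [hA, hB]
  · simpa [hxa] using hx

lemma carrier_union_singleton : carrier (R ∪ {(y, y)}) = carrier R ∪ {y} := by
  ext x
  simp [carrier]

lemma restrict_union_singleton (hR : R ⊆ {y}ᶜ ×ˢ {y}ᶜ) :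
    restrict (R ∪ {(y, y)}) (Z ∪ {y}) = restrict R Z ∪ {(y, y)} := by
  ext ⟨a, b⟩
  have := @hR (a, b)
  simp only [restrict, Set.mem_inter_iff, Set.mem_union, Set.mem_prod, Set.mem_singleton_iff,
    Set.mem_compl_iff, Prod.mk.injEq] at this ⊢
  tauto

lemma gamma_union_singleton (hR : R ⊆ {y}ᶜ ×ˢ {y}ᶜ) :
    gamma (R ∪ {(y, y)}) (Z ∪ {y}) = gamma R Z ∪ {y} := by
  ext x
  constructor
  · rintro ⟨m, hm, n, hn, hmx | hmx, hxn | hxn⟩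
    · have hm' : m ∈ Z := hm.resolve_right (hR hmx).1
      have hn' : n ∈ Z := hn.resolve_right (hR hxn).2
      exact .inl ⟨m, hm', n, hn', hmx, hxn⟩
    · exact absurd (Prod.mk.inj hxn).1 (hR hmx).2
    · exact .inr (Prod.mk.inj hmx).2
    · exact .inr (Prod.mk.inj hmx).2
  · rintro (⟨m, hm, n, hn, hmx, hxn⟩ | rfl)
    · exact ⟨m, .inl hm, n, .inl hn, .inl hmx, .inl hxn⟩
    · exact ⟨x, .inr rfl, x, .inr rfl, .inr rfl, .inr rfl⟩

lemma isPor_union_singleton_iff (hy : y ∉ S) (hR : R ⊆ {y}ᶜ ×ˢ {y}ᶜ) :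
    IsPor (S ∪ {y}) (R ∪ {(y, y)}) ↔ IsPor S R := by
  have hyR : ∀ {a b}, (a, b) ∈ R ∪ {(y, y)} → a ≠ y → (a, b) ∈ R := fun h ha =>
    h.resolve_right fun h' => ha (Prod.mk.inj h').1
  constructor
  · rintro ⟨hsub, hrefl, hanti, htrans⟩
    refine ⟨fun p hp => ?_, fun x hx => ?_, fun a b hab hba => hanti a b (.inl hab) (.inl hba),
      fun a b c hab hbc => hyR (htrans a b c (.inl hab) (.inl hbc)) (hR hab).1⟩
    · obtain ⟨h1, h2⟩ := hsub (.inl hp)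
      exact ⟨h1.resolve_right (hR hp).1, h2.resolve_right (hR hp).2⟩
    · exact hyR (hrefl x (.inl hx)) fun h => hy (h ▸ hx)
  · rintro ⟨hsub, hrefl, hanti, htrans⟩
    refine ⟨?_, ?_, ?_, ?_⟩
    · rintro p (hp | rfl)
      · exact ⟨.inl (hsub hp).1, .inl (hsub hp).2⟩
      · exact ⟨.inr rfl, .inr rfl⟩
    · rintro x (hx | rfl)
      · exact .inl (hrefl x hx)
      · exact .inr rfl
    · rintro a b (hab | hab) hba
      · exact hanti a b hab (hyR hba (hR hab).2)
      · exact (Prod.mk.inj hab).1.trans (Prod.mk.inj hab).2.symm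
    · rintro a b c (hab | hab) (hbc | hbc)
      · exact .inl (htrans a b c hab hbc)
      · exact absurd (Prod.mk.inj hbc).1 (hR hab).2
      · obtain ⟨rfl, rfl⟩ := Prod.mk.inj hab
        exact .inl hbc
      · obtain ⟨rfl, rfl⟩ := Prod.mk.inj hab
        exact .inr hbc

lemma union_singleton_mem_gsetM_iff (hyQ : (y, y) ∉ Q) (hy : y ∉ M ∪ Z)
    (hG : G ⊆ {y}ᶜ ×ˢ {y}ᶜ) :
    G ∪ {(y, y)} ∈ GsetM (Q ∪ {(y, y)}) (Z ∪ {y}) M ↔ G ∈ GsetM Q Z M := by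
  have hyG : (y, y) ∉ restrict G Z := fun h => (hG h.1).1 rfl
  have hyγ : y ∉ gamma G Z := fun ⟨_, _, _, _, h, _⟩ => (hG h).2 rfl
  have hyc : y ∉ carrier G := fun h => (hG h).1 rfl
  simp only [GsetM, Iset, Set.mem_ofPred_eq, ← Set.union_assoc, isPor_union_singleton_iff hy hG,
    restrict_union_singleton hG, gamma_union_singleton hG, carrier_union_singleton,
    union_singleton_inj hyG hyQ, union_singleton_inj hyγ hyc]

lemma eq_of_rel_of_mem_gsetM_union_singleton (hQ : Q ⊆ Z ×ˢ Z) (hyZ : y ∉ Z)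
    (hG : G ∈ GsetM (Q ∪ {(y, y)}) (Z ∪ {y}) M) {x : α} (hx : (x, y) ∈ G ∨ (y, x) ∈ G) :
    x = y := by
  obtain ⟨⟨⟨hsub, hrefl, hanti, htrans⟩, hres⟩, hgam⟩ := hG
  have hZ_iff : ∀ {a b}, (a, b) ∈ G → a ∈ Z ∪ {y} → b ∈ Z ∪ {y} → (a ∈ Z ↔ b ∈ Z) := by
    intro a b hab ha hb
    have : (a, b) ∈ restrict G (Z ∪ {y}) := ⟨hab, ha, hb⟩
    rcases hres ▸ this with hQab | hyab
    · exact iff_of_true (hQ hQab).1 (hQ hQab).2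
    · obtain ⟨rfl, rfl⟩ := Prod.mk.inj hyab
      rfl
  have hx_mem : x ∈ gamma G (Z ∪ {y}) := by
    rw [hgam]
    refine hrefl x ?_
    rcases hx with h | h
    exacts [(hsub h).1, (hsub h).2]
  obtain ⟨m, hm, n, hn, hmx, hxn⟩ := hx_mem
  rcases hx with hxy | hyx
  · have hmy := htrans m x y hmx hxy
    obtain rfl : m = y := hm.resolve_left fun h => hyZ ((hZ_iff hmy hm (.inr rfl)).1 h)
    exact hanti x m hxy hmx
  · have hyn := htrans y x n hyx hxn
    obtain rfl : n = y := hn.resolve_left fun h => hyZ ((hZ_iff hyn (.inr rfl) hn).2 h)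
    exact hanti x n hxn hyx

lemma mem_gset_union_singleton_iff {X : Set α} (hQ : Q ⊆ Z ×ˢ Z) (hy : y ∉ X ∪ Z) :
    G ∈ Gset (Q ∪ {(y, y)}) X (Z ∪ {y}) ↔ ∃ G₀ ∈ Gset Q X Z, G = G₀ ∪ {(y, y)} := by
  have hyZ : y ∉ Z := fun h => hy (.inr h)
  have hyQ : (y, y) ∉ Q := fun h => hyZ (hQ h).1
  have hyM : ∀ {M}, M ⊆ X → y ∉ M ∪ Z := fun hMX h => hy (h.imp_left (hMX ·))
  constructor
  · rintro ⟨M, hMX, hG⟩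
    have hyy : (y, y) ∈ G := hG.1.1.2.1 y (.inr (.inr rfl))
    have hG₀ : G \ {(y, y)} ⊆ {y}ᶜ ×ˢ {y}ᶜ := by
      rintro ⟨a, b⟩ ⟨hab, hne⟩
      refine ⟨fun (ha : a = y) => hne ?_, fun (hb : b = y) => hne ?_⟩
      · subst ha
        rw [eq_of_rel_of_mem_gsetM_union_singleton hQ hyZ hG (.inr hab)]
        rfl
      · subst hb
        rw [eq_of_rel_of_mem_gsetM_union_singleton hQ hyZ hG (.inl hab)]
        rfl
    have hG_eq : G = G \ {(y, y)} ∪ {(y, y)} :=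
      (Set.sdiff_union_of_subset (Set.singleton_subset_iff.2 hyy)).symm
    rw [hG_eq, union_singleton_mem_gsetM_iff hyQ (hyM hMX) hG₀] at hG
    exact ⟨_, ⟨M, hMX, hG⟩, hG_eq⟩
  · rintro ⟨G₀, ⟨M, hMX, hG₀⟩, rfl⟩
    have hG₀y : G₀ ⊆ {y}ᶜ ×ˢ {y}ᶜ := fun p hp =>
      ⟨fun h => hyM hMX (h ▸ (hG₀.1.1.1 hp).1), fun h => hyM hMX (h ▸ (hG₀.1.1.1 hp).2)⟩
    exact ⟨M, hMX, (union_singleton_mem_gsetM_iff hyQ (hyM hMX) hG₀y).2 hG₀⟩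

end IsolatedPoint

theorem stmt15_general {α : Type*} (X Z : Set α)
    (Q : Set (α × α)) (hQ : IsPor Z Q)
    (y : α) (hy : y ∉ X ∪ Z) :
    Gset (Q ∪ {(y, y)}) X (Z ∪ {y}) =
        (fun G => G ∪ {(y, y)}) '' Gset Q X Z ∧
      ∀ G' : Set (α × α), G' ∈ Gset (Q ∪ {(y, y)}) X (Z ∪ {y}) ↔
        ∃ G ∈ Gset Q X Z, G' = G ∪ {(y, y)} := by
  have key (G' : Set (α × α)) := mem_gset_union_singleton_iff (G := G') hQ.1 hy
  refine ⟨Set.ext fun G' => (key G').trans ?_, key⟩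
  simp only [Set.mem_image, eq_comm]

/-- `𝔊_{Q+A_y}(X) = {G + A_y : G ∈ 𝔊_Q(X)}`. -/
theorem stmt15 {α : Type*} (X Z : Set α) (hX : X.Finite) (hZ : Z.Finite)
    (hXZ : Disjoint X Z) (Q : Set (α × α)) (hQ : IsPor Z Q)
    (y : α) (hy : y ∉ X ∪ Z) :
    Gset (Q ∪ {(y, y)}) X (Z ∪ {y}) =
        (fun G => G ∪ {(y, y)}) '' Gset Q X Z ∧
      ∀ G' : Set (α × α), G' ∈ Gset (Q ∪ {(y, y)}) X (Z ∪ {y}) ↔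
        ∃ G ∈ Gset Q X Z, G' = G ∪ {(y, y)} :=
  stmt15_general X Z Q hQ y hy

end Erne
end

section
/- Let X, Y be finite disjoint sets and Q ∈ 𝔓(Y). Then 𝔐*_Q(X,Y) ⊆ 𝔐_Q(X,Y); that is, if R ∈ ℭ_Q(X,Y) satisfies max Q = max R, then Y is an upper end of R. -/
namespace Erne

variable {α : Type*}

section

variable {S M : Set α} {R : Set (α × α)}

lemma maxPts_restrict_subset : maxPts (restrict R M) ⊆ M := by
  intro m hm
  have hmm : m ∈ up (restrict R M) m := hm.symm ▸ rfl
  exact hmm.2.1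

/-- Minimising the up-set `↑_R m` over `m ∈ ↑_R x` yields an `R`-maximal point, since up-sets
shrink as one moves up. -/
lemma IsPor.exists_rel_mem_maxPts (hR : IsPor S R) (hS : S.Finite) {x : α} (hx : x ∈ S) :
    ∃ m ∈ maxPts R, (x, m) ∈ R := by
  obtain ⟨hsub, hrefl, hanti, htrans⟩ := hR
  have hfin : (up R x).Finite := hS.subset fun z hz => (hsub hz).2
  obtain ⟨m, hxm, hmin⟩ := hfin.exists_minimalFor (up R) (up R x) ⟨x, hrefl x hx⟩
  refine ⟨m, Set.eq_singleton_iff_unique_mem.2 ⟨hrefl m (hsub hxm).2, fun w hmw => ?_⟩, hxm⟩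
  have hup : up R w ⊆ up R m := fun z hwz => htrans _ _ _ hmw hwz
  have hwm : (w, m) ∈ R := hmin (htrans _ _ _ hxm hmw) hup (hrefl m (hsub hxm).2)
  exact hanti _ _ hwm hmw

lemma IsConvex.isUpperEnd_of_maxPts_subset (hM : IsConvex R M) (hR : IsPor S R)
    (hS : S.Finite) (hmax : maxPts R ⊆ M) : IsUpperEnd R M := by
  intro y x hyx hy
  obtain ⟨m, hm, hxm⟩ := hR.exists_rel_mem_maxPts hS (hR.1 hyx).2
  exact hM y m x hy (hmax hm) hyx hxm

end

theorem stmt18_general {α : Type*} (X Y : Set α) (hX : X.Finite) (hY : Y.Finite)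
    (Q : Set (α × α)) :
    MstarSet Q X Y ⊆ Mset Q X Y ∧
      ∀ R ∈ Cset Q X Y, maxPts Q = maxPts R → IsUpperEnd R Y := by
  have upperEnd : ∀ R ∈ Cset Q X Y, maxPts Q = maxPts R → IsUpperEnd R Y := by
    rintro R ⟨hR, hRY, hconv⟩ hmax
    refine hconv.isUpperEnd_of_maxPts_subset hR (hX.union hY) ?_
    rw [← hmax, ← hRY]
    exact maxPts_restrict_subset
  exact ⟨fun R ⟨hC, hmax⟩ => ⟨⟨hC.1, upperEnd R hC hmax⟩, hC⟩, upperEnd⟩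

/-- `𝔐*_Q(X,Y) ⊆ 𝔐_Q(X,Y)`: if `R ∈ ℭ_Q(X,Y)` satisfies
`max Q = max R`, then `Y` is an upper end of `R`. -/
theorem stmt18 {α : Type*} (X Y : Set α) (hX : X.Finite) (hY : Y.Finite)
    (hXY : Disjoint X Y) (Q : Set (α × α)) (hQ : IsPor Y Q) :
    MstarSet Q X Y ⊆ Mset Q X Y ∧
      ∀ R ∈ Cset Q X Y, maxPts Q = maxPts R → IsUpperEnd R Y :=
  stmt18_general X Y hX hY Q

end Erne
end

section
/- Let X and Z be disjoint finite sets, Q ∈ 𝔓(Z), let y be a point not contained in X ∪ Z, and set W = X ∪ Z. For every R ∈ 𝔐*_{Q+A_y}(X, Z∪{y}), with T = τ_{W ∩ ↓_R y, W \ ↓_R y}(R|_W), the set W \ ↓_R y equals ↑_T Z; consequently R = τ_{W \ ↑_T Z, ↑_T Z}(T), so R is uniquely determined by T and the mapping σ : R ↦ τ_{W ∩ ↓_R y, W \ ↓_R y}(R|_W) is injective on 𝔐*_{Q+A_y}(X, Z∪{y}). -/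
namespace Erne

variable {α : Type*}

/-!
Write `W = X ∪ Z`, `D = W ∩ ↓_R y` and `C = W \ ↓_R y`. Since `↓_R y` is a lower end, `C` is an
upper end of `R|_W`, and on relations in which the second block is an upper end `τ_{D,C}` is an
involution; so `R|_W = τ_{D,C}(T)` as soon as `C` is known from `T`. It is: every `x ∈ C` lies
below a maximal point of the finite order `R`, which lies in `Z` because `max R = max (Q + A_y)`
and `x ≰ y`, and `T` contains the dual of `R|_C`; conversely `C ⊇ Z` is an upper end of `T`.
Finally `y` is maximal in `R`, so `R` consists of `R|_W`, `D × {y}` and `(y, y)`.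
-/

lemma mem_tau {A B : Set α} {S : Set (α × α)} {a b : α} :
    (a, b) ∈ tau A B S ↔ ((b, a) ∈ S ∧ b ∈ A ∧ a ∈ A) ∨
      (a ∈ A ∧ b ∈ B ∧ (a, b) ∉ S) ∨ ((b, a) ∈ S ∧ b ∈ B ∧ a ∈ B) := by
  simp only [tau, dual, restrict, Set.mem_union, Set.mem_ofPred_eq, Set.mem_inter_iff,
    Set.mem_prod, Set.mem_sdiff]
  tauto

lemma isUpperEnd_tau {A B : Set α} (hAB : Disjoint A B) (S : Set (α × α)) :
    IsUpperEnd (tau A B S) B := by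
  intro a b hab ha
  rcases mem_tau.mp hab with ⟨-, -, ha'⟩ | ⟨ha', -, -⟩ | ⟨-, hb, -⟩
  · exact absurd ha (Set.disjoint_left.mp hAB ha')
  · exact absurd ha (Set.disjoint_left.mp hAB ha')
  · exact hb

theorem tau_tau {A B : Set α} {S : Set (α × α)} (hAB : Disjoint A B)
    (hS : S ⊆ (A ∪ B) ×ˢ (A ∪ B)) (hB : IsUpperEnd S B) : tau A B (tau A B S) = S := by
  ext ⟨a, b⟩
  have hab := @hS (a, b)
  have hBab := hB a b
  have ha : a ∈ A → a ∉ B := fun h => Set.disjoint_left.mp hAB h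
  have hb : b ∈ A → b ∉ B := fun h => Set.disjoint_left.mp hAB h
  simp only [mem_tau, Set.mem_prod, Set.mem_union] at hab ⊢
  grind

lemma IsUpperEnd.upSet_subset {R : Set (α × α)} {U M : Set α} (hU : IsUpperEnd R U)
    (hM : M ⊆ U) : upSet R M ⊆ U :=
  fun _ ⟨_, hm, hmx⟩ => hU _ _ hmx (hM hm)

lemma isUpperEnd_restrict_diff_down {M W : Set α} {R : Set (α × α)} (hR : IsPor M R) (y : α) :
    IsUpperEnd (restrict R W) (W \ down R y) :=
  fun _ _ hab ha => ⟨hab.2.2, fun hb => ha.2 (hR.2.2.2 _ _ _ hab.1 hb)⟩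

theorem exists_mem_maxPts {M : Set α} {R : Set (α × α)} (hM : M.Finite) (hR : IsPor M R)
    {x : α} (hx : x ∈ M) : ∃ m ∈ maxPts R, (x, m) ∈ R := by
  obtain ⟨hsub, hrefl, hanti, htrans⟩ := hR
  have hfin : (up R x).Finite := hM.subset fun z hz => (hsub hz).2
  obtain ⟨m, hxm, hmin⟩ := hfin.exists_minimalFor (up R) (up R x) ⟨x, hrefl x hx⟩
  have hmm : (m, m) ∈ R := hrefl m (hsub hxm).2
  refine ⟨m, Set.eq_singleton_iff_unique_mem.mpr ⟨hmm, fun z hmz => ?_⟩, hxm⟩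
  have hzm : (z, m) ∈ R :=
    hmin (htrans _ _ _ hxm hmz) (fun w hzw => htrans _ _ _ hmz hzw) hmm
  exact hanti _ _ hzm hmz

def sigmaMap (W : Set α) (y : α) (R : Set (α × α)) : Set (α × α) :=
  tau (W ∩ down R y) (W \ down R y) (restrict R W)

theorem tau_sigmaMap {M W : Set α} {R : Set (α × α)} (hR : IsPor M R) (y : α) :
    tau (W ∩ down R y) (W \ down R y) (sigmaMap W y R) = restrict R W := by
  refine tau_tau Set.disjoint_sdiff_inter.symm ?_ (isUpperEnd_restrict_diff_down hR y)
  rw [Set.inter_union_sdiff]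
  exact Set.inter_subset_right

section MstarSet

variable {X Z : Set α} {Q R : Set (α × α)} {y : α}

lemma mem_maxPts_of_mem_MstarSet (hQ : Q ⊆ Z ×ˢ Z) (hyZ : y ∉ Z)
    (hR : R ∈ MstarSet (Q ∪ {(y, y)}) X (Z ∪ {y})) : y ∈ maxPts R := by
  rw [← hR.2]
  refine Set.eq_singleton_iff_unique_mem.mpr ⟨Or.inr rfl, fun b hb => ?_⟩
  rcases hb with h | h
  · exact absurd (hQ h).1 hyZ
  · exact congrArg Prod.snd h

lemma maxPts_subset_of_mem_MstarSet (hQ : Q ⊆ Z ×ˢ Z)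
    (hR : R ∈ MstarSet (Q ∪ {(y, y)}) X (Z ∪ {y})) : maxPts R ⊆ Z ∪ {y} := by
  rw [← hR.2]
  intro m hm
  have hmm : (m, m) ∈ Q ∪ {(y, y)} := (Set.ext_iff.mp hm m).mpr rfl
  rcases hmm with h | h
  · exact Or.inl (hQ h).1
  · exact Or.inr (congrArg Prod.fst h)

lemma notMem_down_of_mem_MstarSet (hQ : Q ⊆ Z ×ˢ Z) (hyZ : y ∉ Z)
    (hR : R ∈ MstarSet (Q ∪ {(y, y)}) X (Z ∪ {y})) {z : α} (hz : z ∈ Z) : z ∉ down R y := by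
  intro hzy
  have hmem : (z, y) ∈ Q ∪ {(y, y)} := hR.1.2.1 ▸ ⟨hzy, Or.inl hz, Or.inr rfl⟩
  rcases hmem with h | h
  · exact hyZ (hQ h).2
  · obtain rfl : z = y := congrArg Prod.fst (Set.mem_singleton_iff.mp h)
    exact hyZ hz

lemma mem_iff_of_mem_MstarSet (hQ : Q ⊆ Z ×ˢ Z) (hyZ : y ∉ Z)
    (hR : R ∈ MstarSet (Q ∪ {(y, y)}) X (Z ∪ {y})) {a b : α} :
    (a, b) ∈ R ↔ (a, b) ∈ restrict R (X ∪ Z) ∨ b = y ∧ (a = y ∨ a ∈ (X ∪ Z) ∩ down R y) := by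
  have hymax : up R y = {y} := mem_maxPts_of_mem_MstarSet hQ hyZ hR
  constructor
  · intro hab
    obtain ⟨ha, hb⟩ : a ∈ X ∪ Z ∪ {y} ∧ b ∈ X ∪ Z ∪ {y} := by
      simpa only [Set.union_assoc, Set.mem_prod] using hR.1.1.1 hab
    rcases ha with ha | rfl
    · rcases hb with hb | rfl
      · exact Or.inl ⟨hab, ha, hb⟩
      · exact Or.inr ⟨rfl, Or.inr ⟨ha, hab⟩⟩
    · exact Or.inr ⟨(Set.ext_iff.mp hymax b).mp hab, Or.inl rfl⟩
  · rintro (hab | ⟨rfl, rfl | ⟨-, hab⟩⟩)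
    · exact hab.1
    · exact (Set.ext_iff.mp hymax _).mpr rfl
    · exact hab

theorem eq_of_restrict_eq_of_inter_down_eq (hQ : Q ⊆ Z ×ˢ Z) (hyZ : y ∉ Z) {R₁ R₂ : Set (α × α)}
    (h₁ : R₁ ∈ MstarSet (Q ∪ {(y, y)}) X (Z ∪ {y}))
    (h₂ : R₂ ∈ MstarSet (Q ∪ {(y, y)}) X (Z ∪ {y}))
    (hres : restrict R₁ (X ∪ Z) = restrict R₂ (X ∪ Z))
    (hdown : (X ∪ Z) ∩ down R₁ y = (X ∪ Z) ∩ down R₂ y) : R₁ = R₂ := by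
  ext ⟨a, b⟩
  rw [mem_iff_of_mem_MstarSet hQ hyZ h₁, mem_iff_of_mem_MstarSet hQ hyZ h₂, hres, hdown]

theorem diff_down_eq_upSet_sigmaMap (hX : X.Finite) (hZ : Z.Finite) (hQ : Q ⊆ Z ×ˢ Z)
    (hy : y ∉ X ∪ Z) (hR : R ∈ MstarSet (Q ∪ {(y, y)}) X (Z ∪ {y})) :
    (X ∪ Z) \ down R y = upSet (sigmaMap (X ∪ Z) y R) Z := by
  have hyZ : y ∉ Z := fun h => hy (Or.inr h)
  have hZC : Z ⊆ (X ∪ Z) \ down R y :=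
    fun z hz => ⟨Or.inr hz, notMem_down_of_mem_MstarSet hQ hyZ hR hz⟩
  refine Set.Subset.antisymm (fun x hx => ?_)
    ((isUpperEnd_tau Set.disjoint_sdiff_inter.symm _).upSet_subset hZC)
  have hfin : (X ∪ (Z ∪ {y})).Finite := hX.union (hZ.union (Set.finite_singleton y))
  obtain ⟨m, hm, hxm⟩ := exists_mem_maxPts hfin hR.1.1 (by rw [← Set.union_assoc]; exact Or.inl hx.1)
  have hmZ : m ∈ Z := by
    rcases maxPts_subset_of_mem_MstarSet hQ hR hm with hmZ | rfl
    · exact hmZ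
    · exact absurd hxm hx.2
  exact ⟨m, hmZ, mem_tau.mpr (Or.inr (Or.inr ⟨⟨hxm, hx.1, Or.inr hmZ⟩, hx, hZC hmZ⟩))⟩

end MstarSet

theorem stmt19_general {α : Type*} (X Z : Set α) (hX : X.Finite) (hZ : Z.Finite)
    (Q : Set (α × α)) (hQ : IsPor Z Q)
    (y : α) (hy : y ∉ X ∪ Z) :
    (∀ R ∈ MstarSet (Q ∪ {(y, y)}) X (Z ∪ {y}),
      ∀ T, T = tau ((X ∪ Z) ∩ down R y) ((X ∪ Z) \ down R y)
          (restrict R (X ∪ Z)) →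
        (X ∪ Z) \ down R y = upSet T Z ∧
        restrict R (X ∪ Z) = tau ((X ∪ Z) \ upSet T Z) (upSet T Z) T) ∧
    Set.InjOn
      (fun R => tau ((X ∪ Z) ∩ down R y) ((X ∪ Z) \ down R y)
        (restrict R (X ∪ Z)))
      (MstarSet (Q ∪ {(y, y)}) X (Z ∪ {y})) := by
  have hC {R} (hR : R ∈ MstarSet (Q ∪ {(y, y)}) X (Z ∪ {y})) :=
    diff_down_eq_upSet_sigmaMap hX hZ hQ.1 hy hR
  refine ⟨fun R hR T hT => ?_, fun R₁ h₁ R₂ h₂ hσ => ?_⟩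
  · obtain rfl : T = sigmaMap (X ∪ Z) y R := hT
    refine ⟨hC hR, ?_⟩
    rw [← hC hR, Set.sdiff_sdiff_right_self, tau_sigmaMap hR.1.1]
  · have hσ' : sigmaMap (X ∪ Z) y R₁ = sigmaMap (X ∪ Z) y R₂ := hσ
    have hdiff : (X ∪ Z) \ down R₁ y = (X ∪ Z) \ down R₂ y := by
      rw [hC h₁, hC h₂, hσ']
    have hinter : (X ∪ Z) ∩ down R₁ y = (X ∪ Z) ∩ down R₂ y := by
      rw [← Set.sdiff_sdiff_right_self, hdiff, Set.sdiff_sdiff_right_self]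
    refine eq_of_restrict_eq_of_inter_down_eq hQ.1 (fun h => hy (Or.inr h)) h₁ h₂ ?_ hinter
    rw [← tau_sigmaMap h₁.1.1 y, ← tau_sigmaMap h₂.1.1 y, hσ', hinter, hdiff]

/-- With `W = X ∪ Z`, for every `R ∈ 𝔐*_{Q+A_y}(X, Z ∪ {y})`
and `T = τ_{W ∩ ↓_R y, W \ ↓_R y}(R|_W)` we have `W \ ↓_R y = ↑_T Z` and
`R|_W = τ_{W \ ↑_T Z, ↑_T Z}(T)`; consequently `σ` is injective on
`𝔐*_{Q+A_y}(X, Z ∪ {y})`. -/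
theorem stmt19 {α : Type*} (X Z : Set α) (hX : X.Finite) (hZ : Z.Finite)
    (hXZ : Disjoint X Z) (Q : Set (α × α)) (hQ : IsPor Z Q)
    (y : α) (hy : y ∉ X ∪ Z) :
    (∀ R ∈ MstarSet (Q ∪ {(y, y)}) X (Z ∪ {y}),
      ∀ T, T = tau ((X ∪ Z) ∩ down R y) ((X ∪ Z) \ down R y)
          (restrict R (X ∪ Z)) →
        (X ∪ Z) \ down R y = upSet T Z ∧
        restrict R (X ∪ Z) = tau ((X ∪ Z) \ upSet T Z) (upSet T Z) T) ∧
    Set.InjOn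
      (fun R => tau ((X ∪ Z) ∩ down R y) ((X ∪ Z) \ down R y)
        (restrict R (X ∪ Z)))
      (MstarSet (Q ∪ {(y, y)}) X (Z ∪ {y})) :=
  stmt19_general X Z hX hZ Q hQ y hy

end Erne
end
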